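/- arXiv:2401.06240 — 3 statements merged into one kernel-verified Lean document; each statement's English description precedes it below -/
import Mathlib

section
/- For any x ∈ [-1/2, 1/2] and any positive integer n, the sum of squares of the first n Chebyshev polynomials of the first kind satisfies n/2 - √3/3 ≤ Σ_{j=0}^{n-1} T_j(x)² ≤ n/2 + √3/3. -/
/-!
Substituting `x = cos θ` with `θ ∈ [π/3, 2π/3]` gives `T_j(x)² = (1 + cos 2jθ)/2`, so the sum is
`n/2` plus half of `∑_{j<n} cos 2jθ`. Multiplying the latter by `2 sin θ` telescopes to
`sin((2n-1)θ) + sin θ`, and `sin θ ≥ √3/2` bounds it by `(1 + sin θ)/(2 sin θ) ≤ 2√3/3`.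
-/

open Real Polynomial Finset

theorem Real.two_mul_sin_mul_sum_range_cos_two_mul (θ : ℝ) (n : ℕ) :
    2 * sin θ * ∑ j ∈ range n, cos (2 * j * θ) = sin ((2 * n - 1) * θ) + sin θ := by
  induction n with
  | zero => simp [neg_mul, sin_neg]
  | succ n ih =>
    rw [sum_range_succ, mul_add, ih, Nat.cast_succ,
      show (2 * ((n : ℝ) + 1) - 1) * θ = 2 * n * θ + θ by ring,
      show (2 * (n : ℝ) - 1) * θ = 2 * n * θ - θ by ring, sin_add, sin_sub]
    ring

theorem Real.abs_sum_range_cos_two_mul_le {θ : ℝ} (hθ : 0 < sin θ) (n : ℕ) :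
    |∑ j ∈ range n, cos (2 * j * θ)| ≤ (1 + sin θ) / (2 * sin θ) := by
  rw [le_div_iff₀ (by positivity), mul_comm, ← abs_of_pos (a := 2 * sin θ) (by positivity),
    ← abs_mul, two_mul_sin_mul_sum_range_cos_two_mul]
  calc |sin ((2 * n - 1) * θ) + sin θ| ≤ |sin ((2 * n - 1) * θ)| + |sin θ| := abs_add_le _ _
    _ ≤ 1 + sin θ := by rw [abs_of_pos hθ]; gcongr; exact abs_sin_le_one _

theorem Polynomial.Chebyshev.T_real_cos_sq (θ : ℝ) (j : ℤ) :
    ((T ℝ j).eval (cos θ)) ^ 2 = 1 / 2 + cos (2 * j * θ) / 2 := by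
  rw [T_real_cos, cos_sq, ← mul_assoc]

theorem Polynomial.Chebyshev.sum_range_T_real_cos_sq (θ : ℝ) (n : ℕ) :
    ∑ j ∈ range n, ((T ℝ j).eval (cos θ)) ^ 2 = n / 2 + (∑ j ∈ range n, cos (2 * j * θ)) / 2 := by
  simp only [T_real_cos_sq, Int.cast_natCast, sum_add_distrib, sum_const, card_range,
    nsmul_eq_mul, ← sum_div]
  ring

theorem Real.sqrt_three_div_two_le_sin_arccos {x : ℝ} (hx : |x| ≤ 1 / 2) :
    √3 / 2 ≤ sin (arccos x) := by
  rw [sin_arccos, show √3 / 2 = √(3 / 4) by rw [sqrt_div' _ (by norm_num : (0 : ℝ) ≤ 4),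
    show (4 : ℝ) = 2 ^ 2 by norm_num, sqrt_sq (by norm_num)]]
  gcongr
  nlinarith [sq_abs x, abs_nonneg x]

theorem abs_sum_range_cos_two_mul_arccos_le {x : ℝ} (hx : |x| ≤ 1 / 2) (n : ℕ) :
    |∑ j ∈ range n, cos (2 * j * arccos x)| ≤ 2 * √3 / 3 := by
  have hs := sqrt_three_div_two_le_sin_arccos hx
  have h3 : √3 ^ 2 = 3 := sq_sqrt (by norm_num)
  have h3pos : 1 < √3 := by nlinarith [sqrt_nonneg 3]
  refine (abs_sum_range_cos_two_mul_le (by linarith) n).trans ?_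
  rw [div_le_iff₀ (by linarith)]
  nlinarith

open Polynomial Chebyshev in
theorem chebyshev_sum_sq_bounds_general (n : ℕ) (x : ℝ)
    (hx : x ∈ Set.Icc (-(1 / 2) : ℝ) (1 / 2)) :
    (n : ℝ) / 2 - Real.sqrt 3 / 3 ≤
      ∑ j ∈ Finset.range n, ((Polynomial.Chebyshev.T ℝ (j : ℤ)).eval x) ^ 2 ∧
    ∑ j ∈ Finset.range n, ((Polynomial.Chebyshev.T ℝ (j : ℤ)).eval x) ^ 2 ≤
      (n : ℝ) / 2 + Real.sqrt 3 / 3 := by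
  have hx' : |x| ≤ 1 / 2 := abs_le.mpr hx
  have hbound := abs_sum_range_cos_two_mul_arccos_le hx' n
  rw [← cos_arccos (x := x) (by linarith [hx.1]) (by linarith [hx.2]), sum_range_T_real_cos_sq]
  constructor <;> linarith [abs_le.mp hbound]

open Polynomial Chebyshev in
/-- ℓ₂-norm bounds for Chebyshev polynomials of the first kind on `[-1/2, 1/2]`. -/
theorem chebyshev_sum_sq_bounds (n : ℕ) (hn : 0 < n) (x : ℝ)
    (hx : x ∈ Set.Icc (-(1 / 2) : ℝ) (1 / 2)) :
    (n : ℝ) / 2 - Real.sqrt 3 / 3 ≤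
      ∑ j ∈ Finset.range n, ((Polynomial.Chebyshev.T ℝ (j : ℤ)).eval x) ^ 2 ∧
    ∑ j ∈ Finset.range n, ((Polynomial.Chebyshev.T ℝ (j : ℤ)).eval x) ^ 2 ≤
      (n : ℝ) / 2 + Real.sqrt 3 / 3 :=
  chebyshev_sum_sq_bounds_general n x hx
end

section
/- For any x ∈ [-1/2, 1/2] and any positive integer n, the sum of squares of the first n rescaled Chebyshev polynomials satisfies n/2 - √3/3 - 3/4 ≤ Σ_{j=0}^{n-1} T̃_j(x)² ≤ n/2 + √3/3 - 3/4, where T̃_0 = T_0/2 and T̃_j = T_j for j ≥ 1. -/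
/-- The rescaled Chebyshev polynomials of the first kind: `T̃_0 = T_0/2`, `T̃_j = T_j` for `j ≥ 1`. -/
noncomputable def rescaledChebyshevT (j : ℕ) : Polynomial ℝ :=
  if j = 0 then Polynomial.C (1 / 2) else Polynomial.Chebyshev.T ℝ (j : ℤ)

/-- ℓ₂-norm bounds for the rescaled Chebyshev polynomials on `[-1/2, 1/2]`. -/
theorem rescaled_chebyshev_sum_sq_bounds (n : ℕ) (hn : 0 < n) (x : ℝ)
    (hx : x ∈ Set.Icc (-(1 / 2) : ℝ) (1 / 2)) :
    (n : ℝ) / 2 - Real.sqrt 3 / 3 - 3 / 4 ≤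
      ∑ j ∈ Finset.range n, ((rescaledChebyshevT j).eval x) ^ 2 ∧
    ∑ j ∈ Finset.range n, ((rescaledChebyshevT j).eval x) ^ 2 ≤
      (n : ℝ) / 2 + Real.sqrt 3 / 3 - 3 / 4 := by
  obtain ⟨hx1, hx2⟩ := hx
  set θ := Real.arccos x with hθ
  have hxc : Real.cos θ = x := Real.cos_arccos (by linarith) (by linarith)
  have hsin : Real.sin θ = Real.sqrt (1 - x ^ 2) := Real.sin_arccos x
  have h3 : Real.sqrt 3 ^ 2 = 3 := Real.sq_sqrt (by norm_num)
  have h3pos : (0:ℝ) < Real.sqrt 3 := Real.sqrt_pos.2 (by norm_num)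
  have hsin_lb : Real.sqrt 3 / 2 ≤ Real.sin θ := by
    rw [hsin]
    rw [show Real.sqrt 3 / 2 = Real.sqrt (3/4) by
      rw [show (3:ℝ)/4 = 3 / 2^2 by norm_num, Real.sqrt_div' , Real.sqrt_sq] <;> norm_num]
    apply Real.sqrt_le_sqrt; nlinarith
  have hsin_ub : Real.sin θ ≤ 1 := Real.sin_le_one θ
  -- telescoping sum
  have key : ∀ m : ℕ, (∑ j ∈ Finset.range m, Real.cos (2 * j * θ)) * (2 * Real.sin θ)
      = Real.sin ((2 * m - 1) * θ) + Real.sin θ := by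
    intro m
    induction m with
    | zero => simp [Real.sin_neg]
    | succ k ih =>
      rw [Finset.sum_range_succ, add_mul, ih]
      push_cast
      have e1 : ((2 * (k+1) : ℝ) - 1) * θ = 2 * k * θ + θ := by ring
      have e2 : ((2 * (k:ℝ)) - 1) * θ = 2 * k * θ - θ := by ring
      rw [e1, e2, Real.sin_add, Real.sin_sub]
      ring
  set C := ∑ j ∈ Finset.range n, Real.cos (2 * j * θ) with hC
  have hCb : C * (2 * Real.sin θ) = Real.sin ((2 * n - 1) * θ) + Real.sin θ := key n
  have hb1 : Real.sin ((2 * n - 1) * θ) ≤ 1 := Real.sin_le_one _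
  have hb2 : -1 ≤ Real.sin ((2 * n - 1) * θ) := Real.neg_one_le_sin _
  have hCub : C ≤ 2 * Real.sqrt 3 / 3 := by nlinarith
  have hClb : -(2 * Real.sqrt 3 / 3) ≤ C := by nlinarith
  -- sum identity
  have hsum : ∑ j ∈ Finset.range n, ((rescaledChebyshevT j).eval x) ^ 2
      = (n : ℝ) / 2 - 3 / 4 + C / 2 := by
    have hterm : ∀ j ∈ Finset.range n, ((rescaledChebyshevT j).eval x) ^ 2
        = (1 / 2 + Real.cos (2 * j * θ) / 2) - (if j = 0 then (3:ℝ)/4 else 0) := by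
      intro j _
      rcases eq_or_ne j 0 with rfl | hj
      · simp [rescaledChebyshevT]; norm_num
      · simp only [rescaledChebyshevT, if_neg hj]
        rw [← hxc, Polynomial.Chebyshev.T_real_cos]
        have : Real.cos (2 * j * θ) = Real.cos (2 * ((j:ℝ) * θ)) := by ring_nf
        rw [this, Real.cos_two_mul]
        push_cast
        ring
    rw [Finset.sum_congr rfl hterm, Finset.sum_sub_distrib, Finset.sum_ite_eq' (Finset.range n) 0,
      if_pos (Finset.mem_range.2 hn)]
    rw [Finset.sum_add_distrib, Finset.sum_const, ← Finset.sum_div, ← hC]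
    simp
    ring
  rw [hsum]
  constructor <;> nlinarith
end

section
/- Let C and C̃ be invertible matrices of the same size, let ψ and ψ̃ be unit vectors. Then the distance between the normalized solutions of the linear systems satisfies ‖C̃⁻¹ψ̃/‖C̃⁻¹ψ̃‖ - C⁻¹ψ/‖C⁻¹ψ‖‖ ≤ 2‖C⁻¹‖·‖ψ̃ - ψ‖/‖C⁻¹ψ‖ + 2‖C̃⁻¹‖·‖C⁻¹‖·‖C̃ - C‖/‖C⁻¹ψ‖. -/
lemma normalize_sub_normalize_le {E : Type*} [NormedAddCommGroup E] [NormedSpace ℝ E]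
    (x y : E) (hy : y ≠ 0) :
    ‖‖x‖⁻¹ • x - ‖y‖⁻¹ • y‖ ≤ 2 * ‖x - y‖ / ‖y‖ := by
  have hy' : (0:ℝ) < ‖y‖ := norm_pos_iff.mpr hy
  rcases eq_or_ne x 0 with hx | hx
  · subst hx
    simp only [norm_zero, inv_zero, zero_smul, zero_sub, norm_neg, norm_smul,
      norm_inv, norm_norm, inv_mul_cancel₀ hy'.ne']
    rw [mul_div_assoc, div_self hy'.ne']
    norm_num
  · have hx' : (0:ℝ) < ‖x‖ := norm_pos_iff.mpr hx
    have hdecomp : ‖x‖⁻¹ • x - ‖y‖⁻¹ • y = (‖x‖⁻¹ - ‖y‖⁻¹) • x + ‖y‖⁻¹ • (x - y) := by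
      module
    have h1 : ‖(‖x‖⁻¹ - ‖y‖⁻¹) • x‖ ≤ ‖x - y‖ / ‖y‖ := by
      rw [norm_smul, Real.norm_eq_abs]
      have habs : |‖x‖⁻¹ - ‖y‖⁻¹| = |‖y‖ - ‖x‖| / (‖x‖ * ‖y‖) := by
        have : ‖x‖⁻¹ - ‖y‖⁻¹ = (‖y‖ - ‖x‖) / (‖x‖ * ‖y‖) := by
          field_simp
        rw [this, abs_div, abs_of_pos (mul_pos hx' hy')]
      rw [habs]
      have h2 : |‖y‖ - ‖x‖| ≤ ‖x - y‖ := by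
        rw [abs_sub_comm]; exact abs_norm_sub_norm_le x y
      rw [div_mul_eq_mul_div, div_le_div_iff₀ (mul_pos hx' hy') hy']
      calc |‖y‖ - ‖x‖| * ‖x‖ * ‖y‖ ≤ ‖x - y‖ * ‖x‖ * ‖y‖ := by gcongr
        _ = ‖x - y‖ * (‖x‖ * ‖y‖) := by ring
    have h3 : ‖‖y‖⁻¹ • (x - y)‖ = ‖x - y‖ / ‖y‖ := by
      rw [norm_smul, Real.norm_eq_abs, abs_of_pos (inv_pos.mpr hy')]
      field_simp
    calc ‖‖x‖⁻¹ • x - ‖y‖⁻¹ • y‖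
        ≤ ‖(‖x‖⁻¹ - ‖y‖⁻¹) • x‖ + ‖‖y‖⁻¹ • (x - y)‖ := by
          rw [hdecomp]; exact norm_add_le _ _
      _ ≤ ‖x - y‖ / ‖y‖ + ‖x - y‖ / ‖y‖ := by rw [h3]; linarith
      _ = 2 * ‖x - y‖ / ‖y‖ := by ring

set_option synthInstance.maxHeartbeats 1000000 in
set_option maxHeartbeats 1000000 in
/-- Perturbation bound for quantum linear systems: for invertible operators `C`, `C̃` on
`ℂ^d` and unit vectors `ψ`, `ψ̃`, the distance between the normalized solutions satisfies
`‖C̃⁻¹ψ̃/‖C̃⁻¹ψ̃‖ - C⁻¹ψ/‖C⁻¹ψ‖‖ ≤ 2‖C⁻¹‖‖ψ̃-ψ‖/‖C⁻¹ψ‖ + 2‖C̃⁻¹‖‖C⁻¹‖‖C̃-C‖/‖C⁻¹ψ‖`. -/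
theorem linear_system_perturbation (d : ℕ)
    (C C' : EuclideanSpace ℂ (Fin d) ≃L[ℂ] EuclideanSpace ℂ (Fin d))
    (ψ ψ' : EuclideanSpace ℂ (Fin d)) (hψ : ‖ψ‖ = 1) (hψ' : ‖ψ'‖ = 1) :
    ‖‖C'.symm ψ'‖⁻¹ • (C'.symm ψ') - ‖C.symm ψ‖⁻¹ • (C.symm ψ)‖ ≤
      2 * ‖(C.symm : EuclideanSpace ℂ (Fin d) →L[ℂ] EuclideanSpace ℂ (Fin d))‖ * ‖ψ' - ψ‖
        / ‖C.symm ψ‖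
      + 2 * ‖(C'.symm : EuclideanSpace ℂ (Fin d) →L[ℂ] EuclideanSpace ℂ (Fin d))‖
        * ‖(C.symm : EuclideanSpace ℂ (Fin d) →L[ℂ] EuclideanSpace ℂ (Fin d))‖
        * ‖(C' : EuclideanSpace ℂ (Fin d) →L[ℂ] EuclideanSpace ℂ (Fin d))
            - (C : EuclideanSpace ℂ (Fin d) →L[ℂ] EuclideanSpace ℂ (Fin d))‖
        / ‖C.symm ψ‖ := by
  have hψne : ψ ≠ 0 := by intro h; rw [h, norm_zero] at hψ; norm_num at hψ
  have hyne : C.symm ψ ≠ 0 := by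
    intro h
    apply hψne
    have := congrArg C h
    simpa using this
  have hypos : (0:ℝ) < ‖C.symm ψ‖ := norm_pos_iff.mpr hyne
  have key : ‖C'.symm ψ' - C.symm ψ‖ ≤
      ‖(C.symm : EuclideanSpace ℂ (Fin d) →L[ℂ] EuclideanSpace ℂ (Fin d))‖ * ‖ψ' - ψ‖
      + ‖(C'.symm : EuclideanSpace ℂ (Fin d) →L[ℂ] EuclideanSpace ℂ (Fin d))‖
        * ‖(C.symm : EuclideanSpace ℂ (Fin d) →L[ℂ] EuclideanSpace ℂ (Fin d))‖
        * ‖(C' : EuclideanSpace ℂ (Fin d) →L[ℂ] EuclideanSpace ℂ (Fin d))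
            - (C : EuclideanSpace ℂ (Fin d) →L[ℂ] EuclideanSpace ℂ (Fin d))‖ := by
    have hsplit : C'.symm ψ' - C.symm ψ =
        C'.symm (((C : EuclideanSpace ℂ (Fin d) →L[ℂ] EuclideanSpace ℂ (Fin d))
          - (C' : EuclideanSpace ℂ (Fin d) →L[ℂ] EuclideanSpace ℂ (Fin d))) (C.symm ψ'))
        + C.symm (ψ' - ψ) := by
      simp only [ContinuousLinearMap.sub_apply, map_sub]
      simp
    rw [hsplit]
    refine le_trans (norm_add_le _ _) ?_
    have h1 : ‖C'.symm (((C : EuclideanSpace ℂ (Fin d) →L[ℂ] EuclideanSpace ℂ (Fin d))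
          - (C' : EuclideanSpace ℂ (Fin d) →L[ℂ] EuclideanSpace ℂ (Fin d))) (C.symm ψ'))‖ ≤
        ‖(C'.symm : EuclideanSpace ℂ (Fin d) →L[ℂ] EuclideanSpace ℂ (Fin d))‖
        * ‖(C.symm : EuclideanSpace ℂ (Fin d) →L[ℂ] EuclideanSpace ℂ (Fin d))‖
        * ‖(C' : EuclideanSpace ℂ (Fin d) →L[ℂ] EuclideanSpace ℂ (Fin d))
            - (C : EuclideanSpace ℂ (Fin d) →L[ℂ] EuclideanSpace ℂ (Fin d))‖ := by
      calc ‖C'.symm (((C : EuclideanSpace ℂ (Fin d) →L[ℂ] EuclideanSpace ℂ (Fin d))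
            - (C' : EuclideanSpace ℂ (Fin d) →L[ℂ] EuclideanSpace ℂ (Fin d))) (C.symm ψ'))‖
          ≤ ‖(C'.symm : EuclideanSpace ℂ (Fin d) →L[ℂ] EuclideanSpace ℂ (Fin d))‖ *
              ‖((C : EuclideanSpace ℂ (Fin d) →L[ℂ] EuclideanSpace ℂ (Fin d))
                - (C' : EuclideanSpace ℂ (Fin d) →L[ℂ] EuclideanSpace ℂ (Fin d))) (C.symm ψ')‖ :=
            (C'.symm : EuclideanSpace ℂ (Fin d) →L[ℂ] EuclideanSpace ℂ (Fin d)).le_opNorm _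
        _ ≤ ‖(C'.symm : EuclideanSpace ℂ (Fin d) →L[ℂ] EuclideanSpace ℂ (Fin d))‖ *
              (‖(C : EuclideanSpace ℂ (Fin d) →L[ℂ] EuclideanSpace ℂ (Fin d))
                - (C' : EuclideanSpace ℂ (Fin d) →L[ℂ] EuclideanSpace ℂ (Fin d))‖ *
                ‖C.symm ψ'‖) := by
            gcongr
            exact ContinuousLinearMap.le_opNorm _ _
        _ ≤ ‖(C'.symm : EuclideanSpace ℂ (Fin d) →L[ℂ] EuclideanSpace ℂ (Fin d))‖ *
              (‖(C : EuclideanSpace ℂ (Fin d) →L[ℂ] EuclideanSpace ℂ (Fin d))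
                - (C' : EuclideanSpace ℂ (Fin d) →L[ℂ] EuclideanSpace ℂ (Fin d))‖ *
                (‖(C.symm : EuclideanSpace ℂ (Fin d) →L[ℂ] EuclideanSpace ℂ (Fin d))‖ * ‖ψ'‖)) := by
            gcongr
            simpa using
              (C.symm : EuclideanSpace ℂ (Fin d) →L[ℂ] EuclideanSpace ℂ (Fin d)).le_opNorm ψ'
        _ = ‖(C'.symm : EuclideanSpace ℂ (Fin d) →L[ℂ] EuclideanSpace ℂ (Fin d))‖
            * ‖(C.symm : EuclideanSpace ℂ (Fin d) →L[ℂ] EuclideanSpace ℂ (Fin d))‖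
            * ‖(C' : EuclideanSpace ℂ (Fin d) →L[ℂ] EuclideanSpace ℂ (Fin d))
                - (C : EuclideanSpace ℂ (Fin d) →L[ℂ] EuclideanSpace ℂ (Fin d))‖ := by
            rw [norm_sub_rev, hψ']; ring
    have h2 : ‖C.symm (ψ' - ψ)‖ ≤
        ‖(C.symm : EuclideanSpace ℂ (Fin d) →L[ℂ] EuclideanSpace ℂ (Fin d))‖ * ‖ψ' - ψ‖ := by
      simpa using
        (C.symm : EuclideanSpace ℂ (Fin d) →L[ℂ] EuclideanSpace ℂ (Fin d)).le_opNorm (ψ' - ψ)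
    linarith
  calc ‖‖C'.symm ψ'‖⁻¹ • (C'.symm ψ') - ‖C.symm ψ‖⁻¹ • (C.symm ψ)‖
      ≤ 2 * ‖C'.symm ψ' - C.symm ψ‖ / ‖C.symm ψ‖ :=
        normalize_sub_normalize_le _ _ hyne
    _ ≤ 2 * (‖(C.symm : EuclideanSpace ℂ (Fin d) →L[ℂ] EuclideanSpace ℂ (Fin d))‖ * ‖ψ' - ψ‖
          + ‖(C'.symm : EuclideanSpace ℂ (Fin d) →L[ℂ] EuclideanSpace ℂ (Fin d))‖
            * ‖(C.symm : EuclideanSpace ℂ (Fin d) →L[ℂ] EuclideanSpace ℂ (Fin d))‖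
            * ‖(C' : EuclideanSpace ℂ (Fin d) →L[ℂ] EuclideanSpace ℂ (Fin d))
                - (C : EuclideanSpace ℂ (Fin d) →L[ℂ] EuclideanSpace ℂ (Fin d))‖) / ‖C.symm ψ‖ := by
        gcongr
    _ = 2 * ‖(C.symm : EuclideanSpace ℂ (Fin d) →L[ℂ] EuclideanSpace ℂ (Fin d))‖ * ‖ψ' - ψ‖
          / ‖C.symm ψ‖
        + 2 * ‖(C'.symm : EuclideanSpace ℂ (Fin d) →L[ℂ] EuclideanSpace ℂ (Fin d))‖
          * ‖(C.symm : EuclideanSpace ℂ (Fin d) →L[ℂ] EuclideanSpace ℂ (Fin d))‖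
          * ‖(C' : EuclideanSpace ℂ (Fin d) →L[ℂ] EuclideanSpace ℂ (Fin d))
              - (C : EuclideanSpace ℂ (Fin d) →L[ℂ] EuclideanSpace ℂ (Fin d))‖
          / ‖C.symm ψ‖ := by ring
end
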